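/- arXiv:2010.11116 — 5 statements merged into one kernel-verified Lean document; each statement's English description precedes it below -/
import Mathlib

section
/- Given the multiset union of prefix composition multisets of h binary strings of equal length n, one can determine the real-valued coordinatewise sum of the h strings. Precisely: if s_1,...,s_h and t_1,...,t_h are binary strings of length n such that the multiset union of prefix composition multisets of the s_i equals that of the t_i, then the coordinatewise integer sums satisfy s_1+...+s_h = t_1+...+t_h. -/
open Finset

def wtB {m : ℕ} (s : Fin m → Bool) : ℕ := ∑ i, if s i then 1 else 0

def onesPref {n : ℕ} (s : Fin n → Bool) (i : ℕ) : ℕ :=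
  ∑ j ∈ Finset.univ.filter (fun j : Fin n => (j : ℕ) < i), if s j then 1 else 0

def onesSuff {n : ℕ} (s : Fin n → Bool) (i : ℕ) : ℕ :=
  ∑ j ∈ Finset.univ.filter (fun j : Fin n => n - i ≤ (j : ℕ)), if s j then 1 else 0

/-- Prefix composition multiset: compositions (number of 0s, number of 1s) of all
prefixes of lengths 1,...,n. -/
def Mp {n : ℕ} (s : Fin n → Bool) : Multiset (ℕ × ℕ) :=
  (Multiset.range n).map (fun i => (i + 1 - onesPref s (i + 1), onesPref s (i + 1)))

/-- Suffix composition multiset. -/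
def Msf {n : ℕ} (s : Fin n → Bool) : Multiset (ℕ × ℕ) :=
  (Multiset.range n).map (fun i => (i + 1 - onesSuff s (i + 1), onesSuff s (i + 1)))

/-- Prefix-suffix composition multiset M(s). -/
def Mps {n : ℕ} (s : Fin n → Bool) : Multiset (ℕ × ℕ) := Mp s + Msf s

/-!
The multiset of prefix compositions of a string `s` records, for every length `ℓ`, the number of
ones `onesPref s ℓ` among the first `ℓ` letters, as the second entry of the unique composition of
total size `ℓ`. Summing second entries over compositions of size `ℓ` is additive in the
multiset, so the union of the prefix multisets of `s₁, …, s_h` determines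
`∑ⱼ onesPref sⱼ ℓ` for every `ℓ`, and the `i`-th coordinate of `s₁ + ⋯ + s_h` is the increment
of this quantity from `ℓ = i` to `ℓ = i + 1`.
-/

lemma onesPref_le {n : ℕ} (s : Fin n → Bool) (i : ℕ) : onesPref s i ≤ i :=
  calc onesPref s i ≤ ∑ _j ∈ univ.filter (fun j : Fin n => (j : ℕ) < i), 1 :=
        sum_le_sum fun j _ => by split <;> simp
    _ = (univ.filter fun j : Fin n => (j : ℕ) < i).card := (card_eq_sum_ones _).symm
    _ = min n i := Fin.card_filter_val_lt
    _ ≤ i := min_le_right n i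

lemma onesPref_zero {n : ℕ} (s : Fin n → Bool) : onesPref s 0 = 0 := by
  simp [onesPref]

lemma onesPref_succ {n : ℕ} (s : Fin n → Bool) (i : Fin n) :
    onesPref s (i + 1) = onesPref s i + if s i then 1 else 0 := by
  have hfilter : (univ.filter fun j : Fin n => (j : ℕ) < i + 1) =
      insert i (univ.filter fun j : Fin n => (j : ℕ) < i) := by
    ext j
    simp [le_iff_eq_or_lt, Fin.val_inj]
  rw [onesPref, hfilter, sum_insert (by simp), add_comm]
  rfl

def onesOfSize (ℓ : ℕ) : Multiset (ℕ × ℕ) →+ ℕ :=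
  Multiset.sumAddMonoidHom.comp
    (Multiset.mapAddMonoidHom fun p => if p.1 + p.2 = ℓ then p.2 else 0)

lemma onesOfSize_Mp {n : ℕ} (s : Fin n → Bool) {ℓ : ℕ} (hℓ : ℓ ≤ n) :
    onesOfSize ℓ (Mp s) = onesPref s ℓ := by
  have hsize : ∀ i, i + 1 - onesPref s (i + 1) + onesPref s (i + 1) = i + 1 :=
    fun i => Nat.sub_add_cancel (onesPref_le s (i + 1))
  simp only [onesOfSize, Mp, AddMonoidHom.coe_comp, Function.comp_apply,
    Multiset.coe_mapAddMonoidHom, Multiset.coe_sumAddMonoidHom, Multiset.map_map, hsize]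
  change ∑ i ∈ range n, (if i + 1 = ℓ then onesPref s (i + 1) else 0) = _
  rcases ℓ with _ | k
  · simp [onesPref_zero]
  · simp only [add_left_inj]
    rw [sum_ite_eq' (range n) k, if_pos (mem_range.2 hℓ)]

theorem sum_onesPref_eq_of_sum_Mp_eq {ι : Type*} [Fintype ι] {n : ℕ}
    {s t : ι → Fin n → Bool} (hM : ∑ j, Mp (s j) = ∑ j, Mp (t j)) {ℓ : ℕ} (hℓ : ℓ ≤ n) :
    ∑ j, onesPref (s j) ℓ = ∑ j, onesPref (t j) ℓ := by
  simpa only [map_sum, onesOfSize_Mp _ hℓ] using congrArg (onesOfSize ℓ) hM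

lemma sum_onesPref_succ {ι : Type*} [Fintype ι] {n : ℕ} (s : ι → Fin n → Bool) (i : Fin n) :
    ∑ j, onesPref (s j) (i + 1) = ∑ j, onesPref (s j) i + ∑ j, if s j i then 1 else 0 := by
  simp only [onesPref_succ, sum_add_distrib]

/-- the union of prefix composition multisets of h binary strings of
length n determines their coordinatewise integer sum. -/
theorem stmt0 (n h : ℕ) (s t : Fin h → Fin n → Bool)
    (hM : (∑ j, Mp (s j)) = ∑ j, Mp (t j)) :
    (fun i : Fin n => ∑ j, if s j i then (1 : ℕ) else 0) =
      (fun i : Fin n => ∑ j, if t j i then (1 : ℕ) else 0) := by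
  funext i
  have hle := sum_onesPref_eq_of_sum_Mp_eq hM i.isLt.le
  have hsucc := sum_onesPref_eq_of_sum_Mp_eq hM i.isLt
  rw [sum_onesPref_succ s, sum_onesPref_succ t, hle] at hsucc
  exact Nat.add_left_cancel hsucc
end

section
/- Let s ∈ {0,1}^n with n a perfect square, written in blocks s = s_1 s_2 ... s_{√n} with each block of length √n. Define u = u_1...u_{√n} by u_1 = s_1 and, for j ≥ 2, u_j = s_j if R(u_1...u_{j-1}) and R(s_j) have strictly opposite signs conditions (u_j = s_j when R(u_1...u_{j-1}) < 0 and R(s_j) ≥ 0, or when R(u_1...u_{j-1}) ≥ 0 and R(s_j) < 0; otherwise u_j is the bitwise complement of s_j). Then for every j in [√n], |R(u_1...u_j)| ≤ √n. -/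
/-!
Each block has running digital sum of absolute value at most its length `k`, and the sign
rule makes the block appended at step `j` have sign opposite to the running sum so far.
Adding two integers of opposite signs, both in `[-k, k]`, stays in `[-k, k]`; induct on `j`.
-/

open Finset

/-- Running digital sum of a whole string: R(x) = 2·wt(x) − |x|. -/
def Rds {m : ℕ} (x : Fin m → Bool) : ℤ := 2 * (∑ i, if x i then (1 : ℤ) else 0) - m

lemma abs_add_le_of_mul_nonpos {α : Type*} [CommRing α] [LinearOrder α] [IsStrictOrderedRing α]
    {a b k : α} (hab : a * b ≤ 0) (ha : |a| ≤ k) (hb : |b| ≤ k) : |a + b| ≤ k := by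
  obtain ⟨hka, hak⟩ := abs_le.1 ha
  obtain ⟨hkb, hbk⟩ := abs_le.1 hb
  rcases mul_nonpos_iff.1 hab with ⟨ha0, hb0⟩ | ⟨ha0, hb0⟩ <;>
    exact abs_le.2 ⟨by linarith, by linarith⟩

lemma abs_Rds_le {m : ℕ} (x : Fin m → Bool) : |Rds x| ≤ m := by
  have hbit : ∀ i, (0 : ℤ) ≤ (if x i then 1 else 0) ∧ (if x i then (1 : ℤ) else 0) ≤ 1 :=
    fun i => by split <;> norm_num
  have hlo : 0 ≤ ∑ i, (if x i then (1 : ℤ) else 0) := sum_nonneg fun i _ => (hbit i).1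
  have hhi : ∑ i, (if x i then (1 : ℤ) else 0) ≤ m := by
    simpa using sum_le_sum fun i (_ : i ∈ univ) => (hbit i).2
  rw [Rds, abs_le]
  constructor <;> linarith

lemma Rds_not {m : ℕ} (x : Fin m → Bool) : Rds (fun t => !x t) = -Rds x := by
  have hsum : ∑ i, (if !x i then (1 : ℤ) else 0) + ∑ i, (if x i then (1 : ℤ) else 0) = m := by
    rw [← sum_add_distrib]
    simp_rw [show ∀ i, (if !x i then (1 : ℤ) else 0) + (if x i then 1 else 0) = 1 from
      fun i => by cases x i <;> rfl]
    simp
  simp only [Rds]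
  linarith

lemma Rds_balance {m : ℕ} (S : ℤ) (x : Fin m → Bool) :
    Rds (if (S < 0 ↔ 0 ≤ Rds x) then x else fun t => !x t) =
      if S < 0 then |Rds x| else -|Rds x| := by
  by_cases hS : S < 0 <;> rcases le_or_gt 0 (Rds x) with hx | hx <;>
    simp [hS, hx, not_le.2, Rds_not, abs_of_nonneg, abs_of_neg]

lemma mul_Rds_balance_nonpos {m : ℕ} (S : ℤ) (x : Fin m → Bool) :
    S * Rds (if (S < 0 ↔ 0 ≤ Rds x) then x else fun t => !x t) ≤ 0 := by
  rw [Rds_balance]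
  split_ifs with hS
  · exact mul_nonpos_of_nonpos_of_nonneg hS.le (abs_nonneg _)
  · exact mul_nonpos_of_nonneg_of_nonpos (not_lt.1 hS) (neg_nonpos.2 (abs_nonneg _))

lemma sum_filter_val_lt_succ {M : Type*} [AddCommMonoid M] {k j : ℕ} (f : Fin k → M)
    (hj : j < k) :
    ∑ i ∈ univ.filter (fun i : Fin k => (i : ℕ) < j + 1), f i =
      ∑ i ∈ univ.filter (fun i : Fin k => (i : ℕ) < j), f i + f ⟨j, hj⟩ := by
  have hsplit : univ.filter (fun i : Fin k => (i : ℕ) < j + 1) =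
      insert ⟨j, hj⟩ (univ.filter fun i : Fin k => (i : ℕ) < j) := by
    ext i
    simp only [mem_filter, mem_insert, mem_univ, true_and, Fin.ext_iff]
    omega
  rw [hsplit, sum_insert (by simp), add_comm]

theorem stmt6_general (k : ℕ) (s u : Fin k → Fin k → Bool)
    (hrec : ∀ j : Fin k, 0 < (j : ℕ) →
      u j = if ((∑ i ∈ Finset.univ.filter (fun i : Fin k => (i : ℕ) < (j : ℕ)), Rds (u i)) < 0
          ↔ 0 ≤ Rds (s j))
        then s j else fun t => ! s j t) :
    ∀ j : ℕ, j ≤ k →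
      |∑ i ∈ Finset.univ.filter (fun i : Fin k => (i : ℕ) < j), Rds (u i)| ≤ (k : ℤ) := by
  intro j hj
  induction j with
  | zero => simp
  | succ j ih =>
    have hjk : j < k := hj
    rw [sum_filter_val_lt_succ _ hjk]
    refine abs_add_le_of_mul_nonpos ?_ (ih hjk.le) (abs_Rds_le _)
    rcases Nat.eq_zero_or_pos j with rfl | hj0
    · simp
    · rw [hrec ⟨j, hjk⟩ hj0]
      exact mul_Rds_balance_nonpos _ _

/-- block balancing. With s split into √n blocks of length √n and u built
blockwise by keeping or complementing each block according to the sign rule, the running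
digital sum after any number of complete blocks is at most √n in absolute value. -/
theorem stmt6 (k : ℕ) (s u : Fin k → Fin k → Bool)
    (h0 : ∀ h : 0 < k, u ⟨0, h⟩ = s ⟨0, h⟩)
    (hrec : ∀ j : Fin k, 0 < (j : ℕ) →
      u j = if ((∑ i ∈ Finset.univ.filter (fun i : Fin k => (i : ℕ) < (j : ℕ)), Rds (u i)) < 0
          ↔ 0 ≤ Rds (s j))
        then s j else fun t => ! s j t) :
    ∀ j : ℕ, j ≤ k →
      |∑ i ∈ Finset.univ.filter (fun i : Fin k => (i : ℕ) < j), Rds (u i)| ≤ (k : ℤ) :=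
  stmt6_general k s u hrec
end

section
/- Let u ∈ {0,1}^n satisfy |R(u)_i| ≤ (3/2)√n for all i ∈ [n], let r ∈ {0,1}^{√n} be arbitrary, and let v = 1^{(5/2)√n+1} r u be the concatenation of (5/2)√n+1 ones, r, and u, of total length n + (7/2)√n + 1. Then for every i in the range of v, 0 < R(v)_i ≤ 5√n + 1. -/
/-
The prefix `1^a` with `a = 5k/2 + 1` lifts the running digital sum to `a`. Over the next `k`
positions it moves by at most `k`, so it stays in `[a - k, a + k]`; from then on it is that value plus
`R(u)`, which lies in `[-3k/2, 3k/2]`, and `a - k - 3k/2 > 0`, `a + k + 3k/2 ≤ 5k + 1`.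
-/

open Finset

def RDSat {m : ℕ} (x : Fin m → Bool) (i : ℕ) : ℤ :=
  2 * (∑ j ∈ Finset.univ.filter (fun j : Fin m => (j : ℕ) < i), if x j then (1 : ℤ) else 0) - i

section RunningDigitalSum

variable {M : ℕ} (x : Fin M → Bool)

lemma RDSat_zero : RDSat x 0 = 0 := by
  simp [RDSat]

lemma RDSat_succ_of_lt {i : ℕ} (hi : i < M) :
    RDSat x (i + 1) = RDSat x i + if x ⟨i, hi⟩ then 1 else -1 := by
  have hset : univ.filter (fun j : Fin M => (j : ℕ) < i + 1)
      = insert ⟨i, hi⟩ (univ.filter (fun j : Fin M => (j : ℕ) < i)) := by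
    ext j
    simp only [mem_filter, mem_univ, true_and, mem_insert, Fin.ext_iff]
    omega
  unfold RDSat
  rw [hset, sum_insert (by simp)]
  push_cast
  split <;> ring

lemma RDSat_succ_of_le {i : ℕ} (hi : M ≤ i) : RDSat x (i + 1) = RDSat x i - 1 := by
  have hset : univ.filter (fun j : Fin M => (j : ℕ) < i + 1)
      = univ.filter (fun j : Fin M => (j : ℕ) < i) := by
    ext j
    simp only [mem_filter, mem_univ, true_and]
    omega
  unfold RDSat
  rw [hset]
  push_cast
  ring

lemma abs_RDSat_succ_sub_le (i : ℕ) : |RDSat x (i + 1) - RDSat x i| ≤ 1 := by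
  rcases lt_or_ge i M with hi | hi
  · rw [RDSat_succ_of_lt x hi]
    split <;> simp
  · simp [RDSat_succ_of_le x hi]

lemma abs_RDSat_add_sub_le (i j : ℕ) : |RDSat x (i + j) - RDSat x i| ≤ j := by
  induction j with
  | zero => simp
  | succ j ih =>
    calc |RDSat x (i + (j + 1)) - RDSat x i|
        ≤ |RDSat x (i + j + 1) - RDSat x (i + j)| + |RDSat x (i + j) - RDSat x i| :=
          abs_sub_le _ _ _
      _ ≤ 1 + j := add_le_add (abs_RDSat_succ_sub_le x _) ih
      _ = (j + 1 : ℕ) := by push_cast; ring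

lemma RDSat_eq_self_of_prefix_true {a : ℕ} (haM : a ≤ M)
    (hx : ∀ i : Fin M, (i : ℕ) < a → x i = true) {i : ℕ} (hi : i ≤ a) : RDSat x i = i := by
  induction i with
  | zero => simp [RDSat_zero]
  | succ i ih =>
    have hiM : i < M := by omega
    rw [RDSat_succ_of_lt x hiM, ih (by omega), hx ⟨i, hiM⟩ (by simp; omega)]
    push_cast
    simp

lemma RDSat_add_of_block {N p : ℕ} (y : Fin N → Bool)
    (hxy : ∀ (i : Fin M) (j : Fin N), (i : ℕ) = p + j → x i = y j)
    {j : ℕ} (hjN : j ≤ N) (hjM : p + j ≤ M) : RDSat x (p + j) = RDSat x p + RDSat y j := by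
  induction j with
  | zero => simp [RDSat_zero]
  | succ j ih =>
    have hjM' : p + j < M := by omega
    have hjN' : j < N := by omega
    rw [← add_assoc, RDSat_succ_of_lt x hjM', ih (by omega) (by omega),
      RDSat_succ_of_lt y hjN', hxy ⟨p + j, hjM'⟩ ⟨j, hjN'⟩ rfl]
    ring

end RunningDigitalSum

theorem stmt8_general (k : ℕ)
    (u : Fin (k * k) → Bool)
    (hu : ∀ i : ℕ, 1 ≤ i → i ≤ k * k → 2 * |RDSat u i| ≤ 3 * (k : ℤ))
    (v : Fin (5 * k / 2 + 1 + k + k * k) → Bool)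
    (hv1 : ∀ i : Fin (5 * k / 2 + 1 + k + k * k), (i : ℕ) < 5 * k / 2 + 1 → v i = true)
    (hv3 : ∀ (i : Fin (5 * k / 2 + 1 + k + k * k)) (j : Fin (k * k)),
      (i : ℕ) = 5 * k / 2 + 1 + k + (j : ℕ) → v i = u j) :
    ∀ i : ℕ, 1 ≤ i → i ≤ 5 * k / 2 + 1 + k + k * k →
      0 < RDSat v i ∧ RDSat v i ≤ 5 * (k : ℤ) + 1 := by
  intro i hi hiv
  have hprefix : ∀ i ≤ 5 * k / 2 + 1, RDSat v i = i := fun i hi =>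
    RDSat_eq_self_of_prefix_true v (by omega) hv1 hi
  rcases le_or_gt i (5 * k / 2 + 1) with hia | hia
  · rw [hprefix i hia]
    omega
  have hdrift := abs_le.mp (abs_RDSat_add_sub_le v (5 * k / 2 + 1) (min (i - (5 * k / 2 + 1)) k))
  rw [hprefix _ le_rfl] at hdrift
  rcases le_or_gt i (5 * k / 2 + 1 + k) with hik | hik
  · rw [show 5 * k / 2 + 1 + min (i - (5 * k / 2 + 1)) k = i by omega] at hdrift
    omega
  obtain ⟨j, rfl⟩ : ∃ j, i = 5 * k / 2 + 1 + k + j := ⟨i - (5 * k / 2 + 1 + k), by omega⟩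
  rw [RDSat_add_of_block v u hv3 (by omega) hiv]
  rw [show min (5 * k / 2 + 1 + k + j - (5 * k / 2 + 1)) k = k by omega] at hdrift
  have hu_j := hu j (by omega) (by omega)
  have := neg_abs_le (RDSat u j)
  have := le_abs_self (RDSat u j)
  omega

/-- if |R(u)_i| ≤ (3/2)√n for all i ∈ [n] and v = 1^{(5/2)√n+1} r u, then
0 < R(v)_i ≤ 5√n + 1 throughout v. Here k = √n (a positive even integer), n = k·k. -/
theorem stmt8 (k : ℕ) (hk : 0 < k) (hke : Even k)
    (u : Fin (k * k) → Bool)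
    (hu : ∀ i : ℕ, 1 ≤ i → i ≤ k * k → 2 * |RDSat u i| ≤ 3 * (k : ℤ))
    (r : Fin k → Bool)
    (v : Fin (5 * k / 2 + 1 + k + k * k) → Bool)
    (hv1 : ∀ i : Fin (5 * k / 2 + 1 + k + k * k), (i : ℕ) < 5 * k / 2 + 1 → v i = true)
    (hv2 : ∀ (i : Fin (5 * k / 2 + 1 + k + k * k)) (j : Fin k),
      (i : ℕ) = 5 * k / 2 + 1 + (j : ℕ) → v i = r j)
    (hv3 : ∀ (i : Fin (5 * k / 2 + 1 + k + k * k)) (j : Fin (k * k)),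
      (i : ℕ) = 5 * k / 2 + 1 + k + (j : ℕ) → v i = u j) :
    ∀ i : ℕ, 1 ≤ i → i ≤ 5 * k / 2 + 1 + k + k * k →
      0 < RDSat v i ∧ RDSat v i ≤ 5 * (k : ℤ) + 1 :=
  stmt8_general k u hu v hv1 hv3
end

section
/- The columns of a parity-check matrix of a binary linear code with minimum Hamming distance at least 2h+1 form a B_h sequence: if H is an m×n binary matrix such that every 2h columns of H are linearly independent over F_2 (equivalently the code with parity-check matrix H has minimum distance ≥ 2h+1), then the set of distinct columns of H, viewed as binary vectors, is a B_h set, i.e., no two distinct subsets of at most h columns have equal real-coordinatewise sums. -/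
/-!
Reduce the coordinatewise integer sums modulo 2: if the columns in `A` and in `B` have equal
integer sums, then over `F₂` the columns in the symmetric difference `A ∆ B` sum to zero. Choosing
one column index for each of these (distinct) vectors gives a nonzero vector of weight
`|A ∆ B| ≤ 2h` in the kernel of `H`.
-/

open Finset
open scoped symmDiff

theorem Finset.sum_symmDiff_add_sum_inter_add_sum_inter {ι M : Type*} [DecidableEq ι]
    [AddCommMonoid M] (s t : Finset ι) (f : ι → M) :
    ∑ i ∈ s ∆ t, f i + ∑ i ∈ s ∩ t, f i + ∑ i ∈ s ∩ t, f i = ∑ i ∈ s, f i + ∑ i ∈ t, f i := by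
  rw [symmDiff_eq_sup_sdiff_inf, sup_eq_union, inf_eq_inter, sum_sdiff inter_subset_union,
    sum_union_inter]

theorem Finset.sum_symmDiff_of_zmodTwo {ι G : Type*} [DecidableEq ι] [AddCommGroup G]
    [Module (ZMod 2) G] (s t : Finset ι) (f : ι → G) :
    ∑ i ∈ s ∆ t, f i = ∑ i ∈ s, f i + ∑ i ∈ t, f i := by
  rw [← sum_symmDiff_add_sum_inter_add_sum_inter, add_assoc, ZModModule.add_self, add_zero]

theorem Finset.card_symmDiff_le {ι : Type*} [DecidableEq ι] (s t : Finset ι) :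
    #(s ∆ t) ≤ #s + #t :=
  (card_le_card symmDiff_le_sup).trans (card_union_le s t)

theorem ZMod.sum_eq_of_sum_val_eq {ι : Type*} {n : ℕ} [NeZero n] {A B : Finset (ι → ZMod n)}
    (h : (fun i => ∑ v ∈ A, (v i).val) = (fun i => ∑ v ∈ B, (v i).val)) :
    ∑ v ∈ A, v = ∑ v ∈ B, v := by
  ext i
  have := congrArg (Nat.cast : ℕ → ZMod n) (congrFun h i)
  push_cast [ZMod.natCast_zmod_val] at this
  simpa only [Finset.sum_apply] using this

namespace Matrix

variable {m n R : Type*} [Fintype n] [DecidableEq n] [Semiring R]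

theorem mulVec_indicator (H : Matrix m n R) (S : Finset n) :
    H *ᵥ (fun j => if j ∈ S then 1 else 0) = ∑ j ∈ S, H.col j := by
  ext i
  simp [mulVec, dotProduct, Finset.sum_ite_mem]

theorem sum_col_ne_zero_of_card_le [Nontrivial R] [DecidableEq R] {H : Matrix m n R} {d : ℕ}
    (hker : ∀ x : n → R, x ≠ 0 → #{j | x j ≠ 0} ≤ d → H *ᵥ x ≠ 0)
    {S : Finset n} (hS : S.Nonempty) (hSd : #S ≤ d) : ∑ j ∈ S, H.col j ≠ 0 := by
  have hsupp : ({j | (if j ∈ S then 1 else 0 : R) ≠ 0} : Finset n) = S := by ext; simp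
  rw [← mulVec_indicator]
  refine hker _ (fun h0 => ?_) (by rwa [hsupp])
  obtain ⟨j, hj⟩ := hS
  simpa [hj] using congrFun h0 j

theorem sum_ne_zero_of_subset_cols [Nontrivial R] [DecidableEq R] [DecidableEq (m → R)]
    {H : Matrix m n R} {d : ℕ}
    (hker : ∀ x : n → R, x ≠ 0 → #{j | x j ≠ 0} ≤ d → H *ᵥ x ≠ 0)
    {C : Finset (m → R)} (hC : ∀ v ∈ C, ∃ j, v = H.col j) (hCne : C.Nonempty) (hCd : #C ≤ d) :
    ∑ v ∈ C, v ≠ 0 := by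
  obtain ⟨S, -, hinj, rfl⟩ := exists_subset_injOn_image_eq_of_surjOn Set.univ C
    (f := H.col) fun v hv => (hC v hv).imp fun j hj => ⟨trivial, hj.symm⟩
  rw [sum_image hinj]
  rw [card_image_of_injOn hinj] at hCd
  exact sum_col_ne_zero_of_card_le hker (image_nonempty.mp hCne) hCd

end Matrix

/-- if every 2h columns of a binary matrix H are linearly independent over
F₂ (no nonzero vector of weight ≤ 2h in the kernel), then the set of distinct columns of
H, viewed as binary vectors, is a B_h set: no two distinct subsets of at most h columns
have equal integer coordinatewise sums. -/
theorem stmt10 (m n h : ℕ) (H : Matrix (Fin m) (Fin n) (ZMod 2))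
    (hker : ∀ x : Fin n → ZMod 2, x ≠ 0 →
      (Finset.univ.filter (fun j => x j ≠ 0)).card ≤ 2 * h → H.mulVec x ≠ 0) :
    ∀ A B : Finset (Fin m → ZMod 2),
      (∀ v ∈ A, ∃ j : Fin n, v = fun i => H i j) →
      (∀ v ∈ B, ∃ j : Fin n, v = fun i => H i j) →
      A.card ≤ h → B.card ≤ h → A ≠ B →
      (fun i : Fin m => ∑ v ∈ A, (v i).val) ≠ (fun i : Fin m => ∑ v ∈ B, (v i).val) := by
  intro A B hA hB hAh hBh hAB hsum
  refine H.sum_ne_zero_of_subset_cols hker (C := A ∆ B) (fun v hv => ?_)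
    (symmDiff_nonempty.mpr hAB) (by have := card_symmDiff_le A B; omega) ?_
  · rcases mem_symmDiff.mp hv with ⟨hvA, -⟩ | ⟨hvB, -⟩
    exacts [hA v hvA, hB v hvB]
  · rw [sum_symmDiff_of_zmodTwo, ZMod.sum_eq_of_sum_val_eq hsum, ZModModule.add_self]
end

section
/- Let C ⊆ {0,1}^n be a 2-prefix code in which every codeword can be written as ab with a of length m and b of length n−m. For a ∈ {0,1}^m let B_a = {b : ab ∈ C}. If a ≠ a' both occur as first parts of codewords and wt(a) = wt(a'), then |B_a ∩ B_{a'}| ≤ 1. -/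
/-
Prefix compositions of `a b` of length at most `|a|` are those of `a`; the longer ones are
those of `b` shifted by the composition of `a`. So `M_p(a b)` is `M_p(a)` plus a part that sees
`a` only through its length and weight. When `wt(a) = wt(a')`, exchanging the tails of `a b₁` and
`a' b₂` therefore preserves the union of the prefix multisets, which for `b₁ ≠ b₂` contradicts the
2-prefix property.
-/

open Finset

/-- C is a 2-prefix code. -/
def twoPrefix {n : ℕ} (C : Finset (Fin n → Bool)) : Prop :=
  ∀ S T : Finset (Fin n → Bool), S ⊆ C → T ⊆ C → S.card ≤ 2 → T.card ≤ 2 → S ≠ T →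
    (∑ x ∈ S, Mp x) ≠ ∑ x ∈ T, Mp x

/-- B_a = { b : ab ∈ C }. -/
def BaC {m k : ℕ} (C : Finset (Fin (m + k) → Bool)) (a : Fin m → Bool) :
    Finset (Fin k → Bool) :=
  Finset.univ.filter (fun b => Fin.append a b ∈ C)

theorem Fin.append_eq_append_iff {α : Type*} {m k : ℕ} {a a' : Fin m → α}
    {b b' : Fin k → α} :
    Fin.append a b = Fin.append a' b' ↔ a = a' ∧ b = b' := by
  rw [← Prod.mk.injEq]
  exact (Fin.appendEquiv m k).injective.eq_iff (a := (a, b)) (b := (a', b'))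

section Append

variable {m k : ℕ} (a : Fin m → Bool) (b : Fin k → Bool)

theorem onesPref_append_of_le {i : ℕ} (hi : i ≤ m) :
    onesPref (Fin.append a b) i = onesPref a i := by
  have hb : ∀ j : Fin k, ¬ m + (j : ℕ) < i := fun j => by omega
  rw [onesPref, onesPref, sum_filter, sum_filter, Fin.sum_univ_add]
  simp [hb]

theorem onesPref_append_add (t : ℕ) :
    onesPref (Fin.append a b) (m + t) = wtB a + onesPref b t := by
  have ha : ∀ j : Fin m, (j : ℕ) < m + t := fun j => by omega
  rw [onesPref, onesPref, wtB, sum_filter, sum_filter, Fin.sum_univ_add]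
  simp [ha]

/-- The compositions of the prefixes of length `m + 1, …, m + k` of a word `a b` with
`|a| = m` and `wt(a) = w`. -/
def tailMp (m w : ℕ) (b : Fin k → Bool) : Multiset (ℕ × ℕ) :=
  (Multiset.range k).map fun i => (m + (i + 1) - (w + onesPref b (i + 1)), w + onesPref b (i + 1))

theorem Mp_append : Mp (Fin.append a b) = Mp a + tailMp m (wtB a) b := by
  rw [Mp, Mp, tailMp, Multiset.range_add, Multiset.map_add, Multiset.map_map]
  congr 1
  · refine Multiset.map_congr rfl fun i hi => ?_
    rw [onesPref_append_of_le a b (by simpa using hi)]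
  · refine Multiset.map_congr rfl fun i _ => ?_
    simp only [Function.comp_apply, add_assoc, onesPref_append_add]

end Append

theorem Mp_append_add_Mp_append_swap {m k : ℕ} {a a' : Fin m → Bool} (hw : wtB a = wtB a')
    (b₁ b₂ : Fin k → Bool) :
    Mp (Fin.append a b₁) + Mp (Fin.append a' b₂) =
      Mp (Fin.append a b₂) + Mp (Fin.append a' b₁) := by
  simp only [Mp_append, hw]
  abel

theorem twoPrefix.Mp_add_ne {n : ℕ} {C : Finset (Fin n → Bool)} (hC : twoPrefix C)
    {x y x' y' : Fin n → Bool} (hx : x ∈ C) (hy : y ∈ C) (hx' : x' ∈ C) (hy' : y' ∈ C)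
    (hxy : x ≠ y) (hxy' : x' ≠ y') (hne : ({x, y} : Finset _) ≠ {x', y'}) :
    Mp x + Mp y ≠ Mp x' + Mp y' := by
  have hpair := hC {x, y} {x', y'} (by simp [insert_subset_iff, hx, hy])
    (by simp [insert_subset_iff, hx', hy']) card_le_two card_le_two hne
  rwa [sum_pair hxy, sum_pair hxy'] at hpair

theorem stmt13_general (m k : ℕ) (C : Finset (Fin (m + k) → Bool)) (hC : twoPrefix C)
    (a a' : Fin m → Bool) (ha : a ≠ a') (hw : wtB a = wtB a') :
    (BaC C a ∩ BaC C a').card ≤ 1 := by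
  refine card_le_one.2 fun b₁ hb₁ b₂ hb₂ => by_contra fun hb => ?_
  simp only [BaC, mem_inter, mem_filter, mem_univ, true_and] at hb₁ hb₂
  refine hC.Mp_add_ne hb₁.1 hb₂.2 hb₂.1 hb₁.2 ?_ ?_ ?_
    (Mp_append_add_Mp_append_swap hw b₁ b₂)
  · simp [Fin.append_eq_append_iff, ha]
  · simp [Fin.append_eq_append_iff, ha]
  · intro hpairs
    have : Fin.append a b₁ ∈ ({Fin.append a b₂, Fin.append a' b₁} : Finset _) :=
      hpairs ▸ mem_insert_self _ _
    simp [Fin.append_eq_append_iff, ha, hb] at this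

/-- in a 2-prefix code, if a ≠ a' occur as first parts of codewords and
wt(a) = wt(a'), then |B_a ∩ B_{a'}| ≤ 1. -/
theorem stmt13 (m k : ℕ) (C : Finset (Fin (m + k) → Bool)) (hC : twoPrefix C)
    (a a' : Fin m → Bool) (ha : a ≠ a') (hw : wtB a = wtB a')
    (hex : ∃ b, Fin.append a b ∈ C) (hex' : ∃ b, Fin.append a' b ∈ C) :
    (BaC C a ∩ BaC C a').card ≤ 1 :=
  stmt13_general m k C hC a a' ha hw
end
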